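/- Let X ⊆ S^1 have geodesic diameter strictly less than 2πk/(2k+1). Then there exists a raked homogeneous trigonometric polynomial p(t) = ∑_{j=1}^{k} a_j cos((2j−1)t) + b_j sin((2j−1)t) of degree at most 2k−1 that is strictly positive on all of X. -/

import Mathlib

noncomputable def SM (k : ℕ) (t : ℝ) : EuclideanSpace ℝ (Fin (2 * k)) :=
  WithLp.toLp 2 (fun (i : Fin (2 * k)) => if i.val % 2 = 0 then Real.cos ((2 * ((i.val / 2 : ℕ) : ℝ) + 1) * t)
           else Real.sin ((2 * ((i.val / 2 : ℕ) : ℝ) + 1) * t))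

/-- Geodesic distance on the circle ℝ/2πℤ (total circumference 2π). -/
noncomputable def cdist (s t : ℝ) : ℝ := ‖((s - t : ℝ) : AddCircle (2 * Real.pi))‖

/-- `inArcPi a x` : the point `x` lies in the open counterclockwise arc `(a + π, a)` on ℝ/2πℤ. -/
def inArcPi (a x : ℝ) : Prop :=
  ∃ s : ℝ, 0 < s ∧ s < Real.pi ∧ ∃ m : ℤ, x = a + Real.pi + s + 2 * Real.pi * m

open Real

namespace RPP


/-- The raked trig polynomial predicate matching the goal's sum. -/
def Raked (m : ℕ) (f : ℝ → ℝ) : Prop :=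
  ∃ a b : Fin m → ℝ, ∀ t : ℝ,
    f t = ∑ j : Fin m, (a j * Real.cos ((2 * (j : ℕ) + 1) * t) +
                        b j * Real.sin ((2 * (j : ℕ) + 1) * t))

lemma R_congr {m : ℕ} {f g : ℝ → ℝ} (h : ∀ t, f t = g t) (hf : Raked m f) : Raked m g := by
  obtain ⟨a, b, hab⟩ := hf
  exact ⟨a, b, fun t => (h t).symm.trans (hab t)⟩

lemma R_zero (m : ℕ) : Raked m (fun _ => 0) := by
  refine ⟨fun _ => 0, fun _ => 0, fun t => ?_⟩
  simp

lemma R_add {m : ℕ} {f g : ℝ → ℝ} (hf : Raked m f) (hg : Raked m g) :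
    Raked m (fun t => f t + g t) := by
  obtain ⟨a, b, ha⟩ := hf
  obtain ⟨c, d, hc⟩ := hg
  refine ⟨fun j => a j + c j, fun j => b j + d j, fun t => ?_⟩
  show f t + g t = _
  rw [ha t, hc t, ← Finset.sum_add_distrib]
  apply Finset.sum_congr rfl
  intro j _
  ring

lemma R_smul {m : ℕ} (c : ℝ) {f : ℝ → ℝ} (hf : Raked m f) :
    Raked m (fun t => c * f t) := by
  obtain ⟨a, b, ha⟩ := hf
  refine ⟨fun j => c * a j, fun j => c * b j, fun t => ?_⟩
  show c * f t = _
  rw [ha t, Finset.mul_sum]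
  apply Finset.sum_congr rfl
  intro j _
  ring

lemma R_neg {m : ℕ} {f : ℝ → ℝ} (hf : Raked m f) : Raked m (fun t => -f t) := by
  have := R_smul (-1) hf
  exact R_congr (fun t => by ring) this

lemma R_mono {m m' : ℕ} (h : m ≤ m') {f : ℝ → ℝ} (hf : Raked m f) : Raked m' f := by
  obtain ⟨a, b, ha⟩ := hf
  set A : ℕ → ℝ := fun i => if hj : i < m then a ⟨i, hj⟩ else 0 with hA
  set B : ℕ → ℝ := fun i => if hj : i < m then b ⟨i, hj⟩ else 0 with hB
  refine ⟨fun j => A j, fun j => B j, fun t => ?_⟩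
  have h1 : ∀ (mm : ℕ), (∑ j : Fin mm, (A j * Real.cos ((2 * (j : ℕ) + 1) * t) +
      B j * Real.sin ((2 * (j : ℕ) + 1) * t)))
      = ∑ i ∈ Finset.range mm, (A i * Real.cos ((2 * i + 1) * t) +
        B i * Real.sin ((2 * i + 1) * t)) := by
    intro mm
    exact Fin.sum_univ_eq_sum_range
      (fun i => A i * Real.cos ((2 * i + 1) * t) + B i * Real.sin ((2 * i + 1) * t)) mm
  have h2 : (∑ j : Fin m, (a j * Real.cos ((2 * (j : ℕ) + 1) * t) +
      b j * Real.sin ((2 * (j : ℕ) + 1) * t)))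
      = ∑ j : Fin m, (A j * Real.cos ((2 * (j : ℕ) + 1) * t) +
        B j * Real.sin ((2 * (j : ℕ) + 1) * t)) := by
    apply Finset.sum_congr rfl
    intro j _
    have hj : (j : ℕ) < m := j.isLt
    simp only [hA, hB, dif_pos hj]
  rw [ha t, h2, h1 m, h1 m', ← Finset.sum_subset (Finset.range_subset_range.2 h)]
  intro i _ hi
  have him : ¬ i < m := fun hc => hi (Finset.mem_range.2 hc)
  simp [hA, hB, him]

lemma R_sum {m : ℕ} {ι : Type*} (s : Finset ι) (F : ι → ℝ → ℝ)
    (h : ∀ j ∈ s, Raked m (F j)) : Raked m (fun t => ∑ j ∈ s, F j t) := by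
  classical
  induction s using Finset.induction with
  | empty => exact R_congr (fun t => by simp) (R_zero m)
  | insert x s' hx ih =>
    have h1 := h x (Finset.mem_insert_self x s')
    have h2 := ih (fun j hj => h j (Finset.mem_insert_of_mem hj))
    exact R_congr (fun t => by rw [Finset.sum_insert hx]) (R_add h1 h2)

lemma R_cos_shift {m : ℕ} (j : ℕ) (hj : j < m) (ψ : ℝ) :
    Raked m (fun t => Real.cos ((2 * j + 1 : ℝ) * t + ψ)) := by
  classical
  refine ⟨fun i => if (i : ℕ) = j then Real.cos ψ else 0,
          fun i => if (i : ℕ) = j then -Real.sin ψ else 0, fun t => ?_⟩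
  rw [Finset.sum_eq_single (⟨j, hj⟩ : Fin m)]
  · simp only [if_pos rfl]
    rw [Real.cos_add]
    push_cast
    ring
  · intro i _ hi
    have : (i : ℕ) ≠ j := fun h => hi (Fin.ext h)
    simp [this]
  · intro h
    exact absurd (Finset.mem_univ _) h

lemma R_sin_shift {m : ℕ} (j : ℕ) (hj : j < m) (ψ : ℝ) :
    Raked m (fun t => Real.sin ((2 * j + 1 : ℝ) * t + ψ)) := by
  classical
  refine ⟨fun i => if (i : ℕ) = j then Real.sin ψ else 0,
          fun i => if (i : ℕ) = j then Real.cos ψ else 0, fun t => ?_⟩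
  rw [Finset.sum_eq_single (⟨j, hj⟩ : Fin m)]
  · simp only [if_pos rfl]
    rw [Real.sin_add]
    push_cast
    ring
  · intro i _ hi
    have : (i : ℕ) ≠ j := fun h => hi (Fin.ext h)
    simp [this]
  · intro h
    exact absurd (Finset.mem_univ _) h



lemma sin_mul_sin (α β : ℝ) : sin α * sin β = (cos (α - β) - cos (α + β)) / 2 := by
  rw [cos_sub, cos_add]; ring

lemma cos_q_expand (J g h t : ℝ) :
    cos (J * t) * (sin (t - g) * sin (t - h)) =
      (cos (h - g) / 2) * cos (J * t)
      + ((-(1/4)) * cos ((J + 2) * t + -(g + h)) + (-(1/4)) * cos ((J - 2) * t + (g + h))) := by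
  rw [show (J + 2) * t + -(g + h) = J * t + ((t - g) + (t - h)) by ring,
      show (J - 2) * t + (g + h) = J * t - ((t - g) + (t - h)) by ring,
      show h - g = (t - g) - (t - h) by ring,
      cos_add (J * t), cos_sub (J * t), cos_add (t - g) (t - h), cos_sub (t - g) (t - h)]
  ring

lemma sin_q_expand (J g h t : ℝ) :
    sin (J * t) * (sin (t - g) * sin (t - h)) =
      (cos (h - g) / 2) * sin (J * t)
      + ((-(1/4)) * sin ((J + 2) * t + -(g + h)) + (-(1/4)) * sin ((J - 2) * t + (g + h))) := by
  rw [show (J + 2) * t + -(g + h) = J * t + ((t - g) + (t - h)) by ring,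
      show (J - 2) * t + (g + h) = J * t - ((t - g) + (t - h)) by ring,
      show h - g = (t - g) - (t - h) by ring,
      sin_add (J * t), sin_sub (J * t), cos_add (t - g) (t - h), cos_sub (t - g) (t - h)]
  ring

lemma R_cos_plain {m : ℕ} (j : ℕ) (hj : j < m) :
    Raked m (fun t => Real.cos ((2 * j + 1 : ℝ) * t)) :=
  R_congr (fun t => by rw [add_zero]) (R_cos_shift j hj 0)

lemma R_sin_plain {m : ℕ} (j : ℕ) (hj : j < m) :
    Raked m (fun t => Real.sin ((2 * j + 1 : ℝ) * t)) :=
  R_congr (fun t => by rw [add_zero]) (R_sin_shift j hj 0)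

lemma R_cos_plus2 {m : ℕ} (j : ℕ) (hj : j < m) (ψ : ℝ) :
    Raked (m + 1) (fun t => Real.cos (((2 * j + 1 : ℝ) + 2) * t + ψ)) := by
  refine R_congr (fun t => ?_) (R_cos_shift (j + 1) (by omega) ψ)
  rw [show ((2:ℝ) * (((j:ℕ)+1 : ℕ) : ℝ) + 1) * t + ψ = ((2*(j:ℝ)+1)+2)*t + ψ by push_cast; ring]

lemma R_cos_minus2 {m : ℕ} (j : ℕ) (hj : j < m) (ψ : ℝ) :
    Raked (m + 1) (fun t => Real.cos (((2 * j + 1 : ℝ) - 2) * t + ψ)) := by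
  rcases Nat.eq_zero_or_pos j with hj0 | hj0
  · subst hj0
    refine R_congr (fun t => ?_) (R_cos_shift 0 (by omega) (-ψ))
    rw [show ((2 * (0:ℕ) + 1 : ℝ)) * t + -ψ = -(((2 * (0:ℕ) + 1 : ℝ) - 2) * t + ψ) + 0 by
          push_cast; ring, add_zero, Real.cos_neg]
  · refine R_congr (fun t => ?_) (R_cos_shift (j - 1) (by omega) ψ)
    rw [show (2 * ((j:ℕ) - 1 : ℕ) + 1 : ℝ) = (2 * (j:ℝ) + 1) - 2 by
      have : (((j:ℕ) - 1 : ℕ) : ℝ) = (j : ℝ) - 1 := by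
        push_cast [Nat.cast_sub hj0]; ring
      rw [this]; ring]

lemma R_sin_plus2 {m : ℕ} (j : ℕ) (hj : j < m) (ψ : ℝ) :
    Raked (m + 1) (fun t => Real.sin (((2 * j + 1 : ℝ) + 2) * t + ψ)) := by
  refine R_congr (fun t => ?_) (R_sin_shift (j + 1) (by omega) ψ)
  rw [show ((2:ℝ) * (((j:ℕ)+1 : ℕ) : ℝ) + 1) * t + ψ = ((2*(j:ℝ)+1)+2)*t + ψ by push_cast; ring]

lemma R_sin_minus2 {m : ℕ} (j : ℕ) (hj : j < m) (ψ : ℝ) :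
    Raked (m + 1) (fun t => Real.sin (((2 * j + 1 : ℝ) - 2) * t + ψ)) := by
  rcases Nat.eq_zero_or_pos j with hj0 | hj0
  · subst hj0
    refine R_congr (fun t => ?_) (R_neg (R_sin_shift 0 (by omega) (-ψ)))
    rw [show ((2 * (0:ℕ) + 1 : ℝ)) * t + -ψ = -(((2 * (0:ℕ) + 1 : ℝ) - 2) * t + ψ) + 0 by
          push_cast; ring, add_zero, Real.sin_neg, neg_neg]
  · refine R_congr (fun t => ?_) (R_sin_shift (j - 1) (by omega) ψ)
    rw [show (2 * ((j:ℕ) - 1 : ℕ) + 1 : ℝ) = (2 * (j:ℝ) + 1) - 2 by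
      have : (((j:ℕ) - 1 : ℕ) : ℝ) = (j : ℝ) - 1 := by
        push_cast [Nat.cast_sub hj0]; ring
      rw [this]; ring]

lemma R_cos_mul_q {m : ℕ} (j : ℕ) (hj : j < m) (g h : ℝ) :
    Raked (m + 1) (fun t => Real.cos ((2 * j + 1 : ℝ) * t) * (sin (t - g) * sin (t - h))) := by
  have h1 : Raked (m + 1) (fun t => (cos (h - g) / 2) * Real.cos ((2 * j + 1 : ℝ) * t)) :=
    R_smul _ (R_cos_plain j (by omega))
  have h2 : Raked (m + 1)
      (fun t => (-(1/4)) * cos (((2 * j + 1 : ℝ) + 2) * t + -(g + h))) :=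
    R_smul _ (R_cos_plus2 j hj _)
  have h3 : Raked (m + 1)
      (fun t => (-(1/4)) * cos (((2 * j + 1 : ℝ) - 2) * t + (g + h))) :=
    R_smul _ (R_cos_minus2 j hj _)
  exact R_congr (fun t => (cos_q_expand _ g h t).symm) (R_add h1 (R_add h2 h3))

lemma R_sin_mul_q {m : ℕ} (j : ℕ) (hj : j < m) (g h : ℝ) :
    Raked (m + 1) (fun t => Real.sin ((2 * j + 1 : ℝ) * t) * (sin (t - g) * sin (t - h))) := by
  have h1 : Raked (m + 1) (fun t => (cos (h - g) / 2) * Real.sin ((2 * j + 1 : ℝ) * t)) :=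
    R_smul _ (R_sin_plain j (by omega))
  have h2 : Raked (m + 1)
      (fun t => (-(1/4)) * sin (((2 * j + 1 : ℝ) + 2) * t + -(g + h))) :=
    R_smul _ (R_sin_plus2 j hj _)
  have h3 : Raked (m + 1)
      (fun t => (-(1/4)) * sin (((2 * j + 1 : ℝ) - 2) * t + (g + h))) :=
    R_smul _ (R_sin_minus2 j hj _)
  exact R_congr (fun t => (sin_q_expand _ g h t).symm) (R_add h1 (R_add h2 h3))

lemma R_mul_pair {m : ℕ} {f : ℝ → ℝ} (hf : Raked m f) (g h : ℝ) :
    Raked (m + 1) (fun t => f t * (sin (t - g) * sin (t - h))) := by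
  obtain ⟨a, b, ha⟩ := hf
  have key : ∀ t, f t * (sin (t - g) * sin (t - h)) =
      ∑ j : Fin m, (a j * (Real.cos ((2 * (j:ℕ) + 1 : ℝ) * t) * (sin (t - g) * sin (t - h)))
        + b j * (Real.sin ((2 * (j:ℕ) + 1 : ℝ) * t) * (sin (t - g) * sin (t - h)))) := by
    intro t
    rw [ha t, Finset.sum_mul]
    apply Finset.sum_congr rfl
    intro i _
    ring
  refine R_congr (fun t => (key t).symm) (R_sum Finset.univ _ (fun j _ => ?_))
  exact R_add (R_smul _ (R_cos_mul_q (j:ℕ) j.isLt g h)) (R_smul _ (R_sin_mul_q (j:ℕ) j.isLt g h))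

lemma R_prod : ∀ (r : ℕ) (J : Finset ℕ) (c : ℕ → ℝ), J.card = 2 * r + 1 →
    Raked (r + 1) (fun x => ∏ j ∈ J, Real.sin (x - c j)) := by
  intro r
  induction r with
  | zero =>
    intro J c hJ
    obtain ⟨j, hj⟩ := Finset.card_eq_one.1 (by omega : J.card = 1)
    subst hj
    refine R_congr (fun t => ?_) (?_ : Raked 1 (fun x => Real.sin (x - c j)))
    · rw [Finset.prod_singleton]
    · refine ⟨fun _ => -Real.sin (c j), fun _ => Real.cos (c j), fun t => ?_⟩
      show Real.sin (t - c j) = _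
      rw [Fin.sum_univ_one]
      norm_num [Real.sin_sub]
      ring
  | succ r ih =>
    intro J c hJ
    have hne : J.Nonempty := Finset.card_pos.1 (by omega)
    obtain ⟨j1, hj1⟩ := hne
    have hne2 : (J.erase j1).Nonempty := by
      apply Finset.card_pos.1
      rw [Finset.card_erase_of_mem hj1]
      omega
    obtain ⟨j2, hj2⟩ := hne2
    classical
    set J' := (J.erase j1).erase j2 with hJ'
    have hcard : J'.card = 2 * r + 1 := by
      rw [hJ', Finset.card_erase_of_mem hj2, Finset.card_erase_of_mem hj1]
      omega
    have hstep := R_mul_pair (ih J' c hcard) (c j1) (c j2)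
    refine R_congr (fun x => ?_) hstep
    rw [← Finset.mul_prod_erase J _ hj1, ← Finset.mul_prod_erase (J.erase j1) _ hj2]
    ring



lemma coe_sub_int (v : ℝ) (m : ℤ) :
    ((v - 2 * π * m : ℝ) : AddCircle (2 * π)) = (v : AddCircle (2 * π)) := by
  have h : ((2 * π * m : ℝ) : AddCircle (2 * π)) = 0 := by
    rw [AddCircle.coe_eq_zero_iff]
    exact ⟨m, by push_cast [zsmul_eq_mul]; ring⟩
  calc ((v - 2 * π * m : ℝ) : AddCircle (2 * π))
      = (v : AddCircle (2 * π)) - ((2 * π * m : ℝ) : AddCircle (2 * π)) := by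
        rw [← QuotientAddGroup.mk_sub]
    _ = (v : AddCircle (2 * π)) := by rw [h, sub_zero]

lemma norm_AC_le (v : ℝ) (m : ℤ) : ‖(v : AddCircle (2 * π))‖ ≤ |v - 2 * π * m| := by
  rw [← coe_sub_int v m]
  set w := v - 2 * π * m
  rw [AddCircle.norm_eq]
  have h := round_le ((2 * π)⁻¹ * w) 0
  rw [Int.cast_zero, sub_zero] at h
  have h2p : (0:ℝ) < 2 * π := by positivity
  have e1 : w - round ((2 * π)⁻¹ * w) * (2 * π)
      = (2 * π) * ((2 * π)⁻¹ * w - round ((2 * π)⁻¹ * w)) := by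
    field_simp
  calc |w - round ((2 * π)⁻¹ * w) * (2 * π)|
      = (2 * π) * |(2 * π)⁻¹ * w - round ((2 * π)⁻¹ * w)| := by
        rw [e1, abs_mul, abs_of_pos h2p]
    _ ≤ (2 * π) * |(2 * π)⁻¹ * w| := by
        apply mul_le_mul_of_nonneg_left h (le_of_lt h2p)
    _ = |w| := by
        rw [abs_mul, abs_of_pos (inv_pos.2 h2p)]
        field_simp

lemma norm_AC_pi : ‖((π : ℝ) : AddCircle (2 * π))‖ = π := by
  have := AddCircle.norm_half_period_eq (p := 2 * π)
  rw [show (2 * π) / 2 = π by ring] at this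
  rw [this, abs_of_pos (by positivity : (0:ℝ) < 2 * π)]
  ring

lemma norm_AC_antipode (u : ℝ) :
    π - ‖(u : AddCircle (2 * π))‖ ≤ ‖((u - π : ℝ) : AddCircle (2 * π))‖ := by
  have h : ((π : ℝ) : AddCircle (2 * π)) = (u : AddCircle (2 * π)) - ((u - π : ℝ) : _) := by
    rw [← QuotientAddGroup.mk_sub]
    norm_num
  have := norm_sub_le ((u : AddCircle (2 * π))) (((u - π : ℝ) : AddCircle (2 * π)))
  rw [← h, norm_AC_pi] at this
  linarith

/-- The key separation fact: an A-point of `x` and a B-point of `y` are more than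
`π - cdist x y` apart as reals. -/
lemma key_gap {x y : ℝ} (x0 : ℝ) (m m' : ℤ) :
    π - cdist x y ≤ |(x - x0 + 2 * π * m) - (y - x0 + π + 2 * π * m')| := by
  have h1 : (x - x0 + 2 * π * m) - (y - x0 + π + 2 * π * m') =
      (x - y) - π - 2 * π * (m' - m) := by push_cast; ring
  rw [h1]
  have h2 : ‖(((x - y) - π : ℝ) : AddCircle (2 * π))‖ ≤ |(x - y) - π - 2 * π * (m' - m)| := by
    have := norm_AC_le ((x - y) - π) (m' - m)
    rwa [Int.cast_sub] at this
  have h3 := norm_AC_antipode (x - y)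
  unfold cdist
  linarith




/-- lift of `x - x0` to `[0, 2π)` -/
noncomputable def th (x0 x : ℝ) : ℝ := x - x0 - 2 * π * ⌊(x - x0) / (2 * π)⌋

/-- cell width -/
noncomputable def dlt (k : ℕ) : ℝ := π / (2 * (2 * k + 1))

/-- half the number of cells (cell-shift corresponding to `π`) -/
def Hn (k : ℕ) : ℕ := 2 * (2 * k + 1)

/-- total number of cells -/
def Mn (k : ℕ) : ℕ := 4 * (2 * k + 1)

lemma dlt_pos (k : ℕ) : 0 < dlt k := by
  unfold dlt; positivity

lemma Hn_dlt (k : ℕ) : (Hn k : ℝ) * dlt k = π := by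
  unfold Hn dlt
  have : ((2 * k + 1 : ℕ) : ℝ) ≠ 0 := by positivity
  field_simp
  push_cast
  ring

lemma Mn_dlt (k : ℕ) : (Mn k : ℝ) * dlt k = 2 * π := by
  unfold Mn dlt
  have : ((2 * k + 1 : ℕ) : ℝ) ≠ 0 := by positivity
  field_simp
  ring
  push_cast
  ring

lemma Mn_eq (k : ℕ) : Mn k = 2 * Hn k := by unfold Mn Hn; ring

lemma th_nonneg (x0 x : ℝ) : 0 ≤ th x0 x := by
  unfold th
  have h2p : (0:ℝ) < 2 * π := by positivity
  have := Int.sub_floor_div_mul_nonneg (x - x0) h2p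
  linarith

lemma th_lt (x0 x : ℝ) : th x0 x < 2 * π := by
  unfold th
  have h2p : (0:ℝ) < 2 * π := by positivity
  have := Int.sub_floor_div_mul_lt (x - x0) h2p
  linarith

lemma th_rep (x0 x : ℝ) : ∃ m : ℤ, th x0 x = x - x0 + 2 * π * m := by
  exact ⟨-⌊(x - x0) / (2 * π)⌋, by unfold th; push_cast; ring⟩

noncomputable def cellOf (k : ℕ) (x0 x : ℝ) : ℕ := ⌊th x0 x / dlt k⌋.toNat

lemma cellOf_lt (k : ℕ) (x0 x : ℝ) : cellOf k x0 x < Mn k := by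
  unfold cellOf
  have hd := dlt_pos k
  have h1 : th x0 x / dlt k < Mn k := by
    rw [div_lt_iff₀ hd]
    calc th x0 x < 2 * π := th_lt x0 x
    _ = (Mn k : ℝ) * dlt k := (Mn_dlt k).symm
  have h2 : (⌊th x0 x / dlt k⌋ : ℝ) < (Mn k : ℝ) := lt_of_le_of_lt (Int.floor_le _) h1
  have h3 : ⌊th x0 x / dlt k⌋ < (Mn k : ℤ) := by exact_mod_cast h2
  have h4 : (0:ℤ) ≤ ⌊th x0 x / dlt k⌋ :=
    Int.floor_nonneg.2 (div_nonneg (th_nonneg x0 x) hd.le)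
  omega

lemma cellOf_bounds (k : ℕ) (x0 x : ℝ) :
    (cellOf k x0 x : ℝ) * dlt k ≤ th x0 x ∧ th x0 x < ((cellOf k x0 x : ℝ) + 1) * dlt k := by
  unfold cellOf
  have hd := dlt_pos k
  have hnn : 0 ≤ th x0 x / dlt k := div_nonneg (th_nonneg x0 x) hd.le
  have hfl : (0:ℤ) ≤ ⌊th x0 x / dlt k⌋ := Int.floor_nonneg.2 hnn
  have hc : ((⌊th x0 x / dlt k⌋.toNat : ℤ) : ℝ) = ((⌊th x0 x / dlt k⌋ : ℤ) : ℝ) := by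
    exact_mod_cast congrArg (fun z : ℤ => (z : ℝ)) (Int.toNat_of_nonneg hfl)
  constructor
  · have hle : ((⌊th x0 x / dlt k⌋ : ℤ) : ℝ) ≤ th x0 x / dlt k := Int.floor_le _
    have h2 : ((⌊th x0 x / dlt k⌋ : ℤ) : ℝ) * dlt k ≤ th x0 x := by
      rw [← le_div_iff₀ hd]
      exact hle
    rw [← hc] at h2
    exact h2
  · have hlt : th x0 x / dlt k < ((⌊th x0 x / dlt k⌋ : ℤ) : ℝ) + 1 := Int.lt_floor_add_one _
    have h2 : th x0 x < (((⌊th x0 x / dlt k⌋ : ℤ) : ℝ) + 1) * dlt k := by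
      rw [← div_lt_iff₀ hd]
      exact hlt
    rw [← hc] at h2
    exact h2

/-- cell `i` (mod `Mn k`) contains a point of `X` -/
def VA (k : ℕ) (X : Set ℝ) (x0 : ℝ) (i : ℕ) : Prop :=
  ∃ x ∈ X, cellOf k x0 x = i % Mn k

def Occ (k : ℕ) (X : Set ℝ) (x0 : ℝ) (i : ℕ) : Prop :=
  VA k X x0 i ∨ VA k X x0 (i + Hn k)

section Ctx

variable {k : ℕ} {X : Set ℝ} {x0 : ℝ}

lemma VA_congr {i j : ℕ} (h : i % Mn k = j % Mn k) : VA k X x0 i ↔ VA k X x0 j := by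
  unfold VA; rw [h]

lemma VA_add_M {i : ℕ} : VA k X x0 (i + Mn k) ↔ VA k X x0 i :=
  VA_congr (Nat.add_mod_right i (Mn k))

lemma Occ_add_H {i : ℕ} : Occ k X x0 (i + Hn k) ↔ Occ k X x0 i := by
  unfold Occ
  have h1 : i + Hn k + Hn k = i + Mn k := by unfold Hn Mn; ring
  rw [h1, VA_add_M]
  tauto

lemma bound_eq (k : ℕ) : 2 * π * k / (2 * k + 1) = π - 2 * dlt k := by
  unfold dlt
  have : ((2 * k + 1 : ℕ) : ℝ) ≠ 0 := by positivity
  have h2 : (2 * (k:ℝ) + 1) ≠ 0 := by positivity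
  field_simp
  ring

end Ctx
section Ctx2
variable {k : ℕ} {X : Set ℝ} {x0 : ℝ}

lemma VA_far (hX : ∀ x ∈ X, ∀ y ∈ X, cdist x y < 2 * π * k / (2 * k + 1))
    {i d : ℕ} (hd1 : Hn k - 1 ≤ d) (hd2 : d ≤ Hn k + 1)
    (h1 : VA k X x0 i) (h2 : VA k X x0 (i + d)) : False := by
  obtain ⟨x, hx, hcx⟩ := h1
  obtain ⟨y, hy, hcy⟩ := h2
  set a := cellOf k x0 x with ha
  set b := cellOf k x0 y with hb
  have haM : a < Mn k := cellOf_lt k x0 x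
  have hbM : b < Mn k := cellOf_lt k x0 y
  have hH2 : 2 ≤ Hn k := by unfold Hn; omega
  have hMH : Mn k = 2 * Hn k := Mn_eq k
  -- divisibility
  have e1 : (Mn k : ℤ) ∣ ((i : ℤ) + d) - b := by
    have : b ≡ i + d [MOD Mn k] := by rw [hcy]; exact (Nat.mod_modEq (i + d) (Mn k))
    have := this.dvd
    push_cast at this ⊢
    exact this
  have e2 : (Mn k : ℤ) ∣ (i : ℤ) - a := by
    have : a ≡ i [MOD Mn k] := by rw [hcx]; exact (Nat.mod_modEq i (Mn k))
    have := this.dvd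
    push_cast at this ⊢
    exact this
  have e3 : (Mn k : ℤ) ∣ (b : ℤ) - a - d := by
    have := dvd_sub e2 e1
    have h4 : (i : ℤ) - a - (((i : ℤ) + d) - b) = (b : ℤ) - a - d := by ring
    rwa [h4] at this
  obtain ⟨c, hc⟩ := e3
  have hMpos : (0:ℤ) < (Mn k : ℤ) := by
    have : 0 < Mn k := by unfold Mn; omega
    exact_mod_cast this
  have hceq : c = 0 ∨ c = -1 := by
    have hub : (Mn k : ℤ) * c < (Mn k : ℤ) * 1 := by
      rw [← hc]
      have h6 : Hn k ≤ d + 1 := by omega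
      have : (Hn k : ℤ) ≤ (d:ℤ) + 1 := by exact_mod_cast h6
      omega
    have hlb : (Mn k : ℤ) * (-2) < (Mn k : ℤ) * c := by
      rw [← hc]
      have hd2' : (d:ℤ) ≤ (Hn k : ℤ) + 1 := by exact_mod_cast hd2
      have : (Mn k : ℤ) = 2 * (Hn k : ℤ) := by exact_mod_cast hMH
      omega
    have c1 : c < 1 := lt_of_mul_lt_mul_left hub hMpos.le
    have c2 : -2 < c := lt_of_mul_lt_mul_left hlb hMpos.le
    omega
  -- real positions
  have hd1' : (Hn k : ℝ) - 1 ≤ (d : ℝ) := by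
    have : Hn k - 1 ≤ d := hd1
    have h5 : (Hn k : ℕ) ≤ d + 1 := by omega
    have := (Nat.cast_le (α := ℝ)).2 h5
    push_cast at this
    linarith
  have hd2' : (d : ℝ) ≤ (Hn k : ℝ) + 1 := by
    have := (Nat.cast_le (α := ℝ)).2 hd2
    push_cast at this
    linarith
  have hbx := cellOf_bounds k x0 x
  have hby := cellOf_bounds k x0 y
  rw [← ha] at hbx
  rw [← hb] at hby
  have hd := dlt_pos k
  have hHd : (Hn k : ℝ) * dlt k = π := Hn_dlt k
  have hMd : (Mn k : ℝ) * dlt k = 2 * π := Mn_dlt k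
  obtain ⟨mx, hmx⟩ := th_rep x0 x
  obtain ⟨my, hmy⟩ := th_rep x0 y
  have hcd : cdist y x < π - 2 * dlt k ∧ cdist x y < π - 2 * dlt k := by
    constructor
    · have := hX y hy x hx
      rwa [bound_eq k] at this
    · have := hX x hx y hy
      rwa [bound_eq k] at this
  rcases hceq with hc0 | hc1
  · -- b = a + d
    have hbad : (b : ℝ) = (a : ℝ) + d := by
      rw [hc0, mul_zero] at hc
      have : (b:ℤ) = a + d := by omega
      exact_mod_cast this
    have hlow : ((d:ℝ) - 1) * dlt k < th x0 y - th x0 x := by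
      have l1 : (b:ℝ) * dlt k ≤ th x0 y := hby.1
      have l2 : th x0 x < ((a:ℝ) + 1) * dlt k := hbx.2
      rw [hbad] at l1
      have e : ((d:ℝ) - 1) * dlt k = ((a:ℝ) + d) * dlt k - ((a:ℝ) + 1) * dlt k := by ring
      linarith
    have hhigh : th x0 y - th x0 x < ((d:ℝ) + 1) * dlt k := by
      have l1 : th x0 y < ((b:ℝ) + 1) * dlt k := hby.2
      have l2 : (a:ℝ) * dlt k ≤ th x0 x := hbx.1
      rw [hbad] at l1
      have e : ((d:ℝ) + 1) * dlt k = ((a:ℝ) + d + 1) * dlt k - (a:ℝ) * dlt k := by ring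
      linarith
    have s1 : ((Hn k : ℝ) - 2) * dlt k ≤ ((d:ℝ) - 1) * dlt k :=
      mul_le_mul_of_nonneg_right (by linarith) hd.le
    have s1' : ((Hn k : ℝ) - 2) * dlt k = π - 2 * dlt k := by
      rw [sub_mul, hHd]
    have s2 : ((d:ℝ) + 1) * dlt k ≤ ((Hn k : ℝ) + 2) * dlt k :=
      mul_le_mul_of_nonneg_right (by linarith) hd.le
    have s2' : ((Hn k : ℝ) + 2) * dlt k = π + 2 * dlt k := by
      rw [add_mul, hHd]
    have range1 : π - 2 * dlt k < th x0 y - th x0 x := by linarith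
    have range2 : th x0 y - th x0 x < π + 2 * dlt k := by linarith
    have hkg := key_gap (x := y) (y := x) x0 my mx
    have habs : |(y - x0 + 2 * π * my) - (x - x0 + π + 2 * π * mx)|
        = |th x0 y - th x0 x - π| := by
      rw [hmy, hmx]
      congr 1
      ring
    rw [habs] at hkg
    have hfin : |th x0 y - th x0 x - π| < 2 * dlt k := by
      rw [abs_lt]
      constructor <;> linarith
    linarith [hcd.1, hkg]
  · -- b = a + d - M
    have hbad : (b : ℝ) = (a : ℝ) + d - Mn k := by
      rw [hc1, mul_neg_one] at hc
      have : (b:ℤ) = a + d - Mn k := by omega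
      have h7 : ((b:ℤ):ℝ) = ((a:ℤ):ℝ) + ((d:ℤ):ℝ) - ((Mn k:ℤ):ℝ) := by
        exact_mod_cast congrArg (fun z : ℤ => (z:ℝ)) this
      push_cast at h7
      push_cast
      linarith
    have hlow : ((d:ℝ) - Mn k - 1) * dlt k < th x0 y - th x0 x := by
      have l1 : (b:ℝ) * dlt k ≤ th x0 y := hby.1
      have l2 : th x0 x < ((a:ℝ) + 1) * dlt k := hbx.2
      rw [hbad] at l1
      have e : ((d:ℝ) - Mn k - 1) * dlt k
          = ((a:ℝ) + d - Mn k) * dlt k - ((a:ℝ) + 1) * dlt k := by ring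
      linarith
    have hhigh : th x0 y - th x0 x < ((d:ℝ) - Mn k + 1) * dlt k := by
      have l1 : th x0 y < ((b:ℝ) + 1) * dlt k := hby.2
      have l2 : (a:ℝ) * dlt k ≤ th x0 x := hbx.1
      rw [hbad] at l1
      have e : ((d:ℝ) - Mn k + 1) * dlt k
          = ((a:ℝ) + d - Mn k + 1) * dlt k - (a:ℝ) * dlt k := by ring
      linarith
    have hMH' : (Mn k : ℝ) = 2 * (Hn k : ℝ) := by exact_mod_cast hMH
    have s1 : ((Hn k : ℝ) - 2) * dlt k ≤ ((Mn k : ℝ) - (d:ℝ) - 1) * dlt k :=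
      mul_le_mul_of_nonneg_right (by linarith) hd.le
    have s1' : ((Hn k : ℝ) - 2) * dlt k = π - 2 * dlt k := by
      rw [sub_mul, hHd]
    have s2 : ((Mn k : ℝ) - (d:ℝ) + 1) * dlt k ≤ ((Hn k : ℝ) + 2) * dlt k :=
      mul_le_mul_of_nonneg_right (by linarith) hd.le
    have s2' : ((Hn k : ℝ) + 2) * dlt k = π + 2 * dlt k := by
      rw [add_mul, hHd]
    have e4 : ((Mn k : ℝ) - (d:ℝ) - 1) * dlt k = -(((d:ℝ) - (Mn k:ℝ) + 1) * dlt k) := by ring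
    have e5 : ((Mn k : ℝ) - (d:ℝ) + 1) * dlt k = -(((d:ℝ) - (Mn k:ℝ) - 1) * dlt k) := by ring
    have range1 : π - 2 * dlt k < th x0 x - th x0 y := by linarith
    have range2 : th x0 x - th x0 y < π + 2 * dlt k := by linarith
    have hkg := key_gap (x := x) (y := y) x0 mx my
    have habs : |(x - x0 + 2 * π * mx) - (y - x0 + π + 2 * π * my)|
        = |th x0 x - th x0 y - π| := by
      rw [hmx, hmy]
      congr 1
      ring
    rw [habs] at hkg
    have hfin : |th x0 x - th x0 y - π| < 2 * dlt k := by
      rw [abs_lt]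
      constructor <;> linarith
    linarith [hcd.2, hkg]

end Ctx2

section Ctx3
variable {k : ℕ} {X : Set ℝ} {x0 : ℝ}

lemma VA_zero (hx0 : x0 ∈ X) : VA k X x0 0 := by
  refine ⟨x0, hx0, ?_⟩
  have h1 : th x0 x0 = 0 := by unfold th; simp
  unfold cellOf
  rw [h1]
  simp

lemma Occ_zero (hx0 : x0 ∈ X) : Occ k X x0 0 := Or.inl (VA_zero hx0)

lemma Occ_mul_H (hx0 : x0 ∈ X) : ∀ m : ℕ, Occ k X x0 (Hn k * m) := by
  intro m
  induction m with
  | zero => simpa using Occ_zero hx0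
  | succ m ih =>
    have : Hn k * (m + 1) = Hn k * m + Hn k := by ring
    rw [this, Occ_add_H]
    exact ih

lemma occ_exists (hx0 : x0 ∈ X) (i : ℕ) : ∃ j, i < j ∧ Occ k X x0 j := by
  refine ⟨Hn k * (i + 1), ?_, Occ_mul_H hx0 (i + 1)⟩
  have hH : 2 ≤ Hn k := by unfold Hn; omega
  calc i < i + 1 := Nat.lt_succ_self i
  _ ≤ Hn k * (i + 1) := Nat.le_mul_of_pos_left (i + 1) (by omega)

end Ctx3

open scoped Classical in
noncomputable def nxt (k : ℕ) (X : Set ℝ) (x0 : ℝ) (hx0 : x0 ∈ X) (i : ℕ) : ℕ :=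
  Nat.find (occ_exists (k := k) (X := X) (x0 := x0) hx0 i)

noncomputable def Wk (k : ℕ) (X : Set ℝ) (x0 : ℝ) (hx0 : x0 ∈ X) : ℕ → ℕ
  | 0 => 0
  | (t + 1) => nxt k X x0 hx0 (Wk k X x0 hx0 t)

section Ctx4
variable {k : ℕ} {X : Set ℝ} {x0 : ℝ} (hx0 : x0 ∈ X)

open scoped Classical

lemma nxt_gt (i : ℕ) : i < nxt k X x0 hx0 i :=
  (Nat.find_spec (occ_exists (k := k) (X := X) (x0 := x0) hx0 i)).1

lemma nxt_occ (i : ℕ) : Occ k X x0 (nxt k X x0 hx0 i) :=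
  (Nat.find_spec (occ_exists (k := k) (X := X) (x0 := x0) hx0 i)).2

lemma nxt_min {i j : ℕ} (h1 : i < j) (h2 : j < nxt k X x0 hx0 i) : ¬ Occ k X x0 j := by
  intro hocc
  exact (Nat.find_min (occ_exists (k := k) (X := X) (x0 := x0) hx0 i) h2) ⟨h1, hocc⟩

lemma nxt_le {i j : ℕ} (h1 : i < j) (h2 : Occ k X x0 j) : nxt k X x0 hx0 i ≤ j :=
  Nat.find_min' (occ_exists (k := k) (X := X) (x0 := x0) hx0 i) ⟨h1, h2⟩

lemma nxt_add_H (i : ℕ) : nxt k X x0 hx0 (i + Hn k) = nxt k X x0 hx0 i + Hn k := by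
  apply le_antisymm
  · apply nxt_le hx0
    · have := nxt_gt (k := k) hx0 i
      omega
    · exact Occ_add_H.mpr (nxt_occ hx0 i)
  · by_contra hlt
    push_neg at hlt
    set j := nxt k X x0 hx0 (i + Hn k) with hj
    have hgt : i + Hn k < j := nxt_gt (k := k) hx0 (i + Hn k)
    have hjH : Hn k ≤ j := by omega
    have h1 : i < j - Hn k := by omega
    have h2 : j - Hn k < nxt k X x0 hx0 i := by omega
    have h3 := nxt_min hx0 h1 h2
    have h4 : Occ k X x0 (j - Hn k + Hn k) := by
      have : j - Hn k + Hn k = j := by omega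
      rw [this]
      exact nxt_occ hx0 (i + Hn k)
    rw [Occ_add_H] at h4
    exact h3 h4

lemma Wk_zero : Wk k X x0 hx0 0 = 0 := rfl

lemma Wk_succ (t : ℕ) : Wk k X x0 hx0 (t + 1) = nxt k X x0 hx0 (Wk k X x0 hx0 t) := rfl

lemma Wk_mono : StrictMono (Wk k X x0 hx0) :=
  strictMono_nat_of_lt_succ (fun t => nxt_gt hx0 (Wk k X x0 hx0 t))

lemma Wk_occ (t : ℕ) : Occ k X x0 (Wk k X x0 hx0 t) := by
  cases t with
  | zero => exact Occ_zero hx0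
  | succ t => exact nxt_occ hx0 _

lemma Wk_ge (t : ℕ) : t ≤ Wk k X x0 hx0 t := by
  induction t with
  | zero => omega
  | succ t ih =>
    have := nxt_gt (k := k) hx0 (Wk k X x0 hx0 t)
    rw [Wk_succ]
    omega

lemma Wk_cover {j : ℕ} (hocc : Occ k X x0 j) : ∃ t, Wk k X x0 hx0 t = j := by
  have hex : ∃ T, j < Wk k X x0 hx0 T :=
    ⟨j + 1, lt_of_lt_of_le (Nat.lt_succ_self j) (Wk_ge hx0 (j + 1))⟩
  have hspec : j < Wk k X x0 hx0 (Nat.find hex) := Nat.find_spec hex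
  have hT0 : Nat.find hex ≠ 0 := by
    intro h0
    rw [h0, Wk_zero] at hspec
    omega
  obtain ⟨t, ht⟩ : ∃ t, Nat.find hex = t + 1 := ⟨Nat.find hex - 1, by omega⟩
  rw [ht] at hspec
  have hle : Wk k X x0 hx0 t ≤ j := by
    by_contra hcon
    push_neg at hcon
    exact (Nat.find_min hex (show t < Nat.find hex by omega)) hcon
  rcases eq_or_lt_of_le hle with heq | hlt
  · exact ⟨t, heq⟩
  · exfalso
    refine nxt_min hx0 hlt ?_ hocc
    rw [← Wk_succ hx0 t]
    exact hspec

end Ctx4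

noncomputable def t2v (k : ℕ) (X : Set ℝ) (x0 : ℝ) (hx0 : x0 ∈ X) : ℕ :=
  Classical.choose (Wk_cover hx0 (by simpa using Occ_mul_H hx0 1 : Occ k X x0 (Hn k)))

/-- letters-change indicator along the walk -/
def tauP (k : ℕ) (X : Set ℝ) (x0 : ℝ) (hx0 : x0 ∈ X) (t : ℕ) : Prop :=
  ¬ (VA k X x0 (Wk k X x0 hx0 t) ↔ VA k X x0 (Wk k X x0 hx0 (t + 1)))

section Ctx5
variable {k : ℕ} {X : Set ℝ} {x0 : ℝ} (hx0 : x0 ∈ X)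

lemma Wk_t2 : Wk k X x0 hx0 (t2v k X x0 hx0) = Hn k :=
  Classical.choose_spec (Wk_cover hx0 (by simpa using Occ_mul_H hx0 1 : Occ k X x0 (Hn k)))

lemma t2_pos : 0 < t2v k X x0 hx0 := by
  rcases Nat.eq_zero_or_pos (t2v k X x0 hx0) with h0 | h
  · exfalso
    have := Wk_t2 (k := k) hx0
    rw [h0, Wk_zero] at this
    unfold Hn at this
    omega
  · exact h

lemma Wk_add_t2 (t : ℕ) :
    Wk k X x0 hx0 (t + t2v k X x0 hx0) = Wk k X x0 hx0 t + Hn k := by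
  induction t with
  | zero => rw [Nat.zero_add, Wk_t2 hx0, Wk_zero, Nat.zero_add]
  | succ t ih =>
    have h1 : t + 1 + t2v k X x0 hx0 = (t + t2v k X x0 hx0) + 1 := by omega
    rw [h1, Wk_succ hx0, ih, nxt_add_H hx0, ← Wk_succ hx0]

lemma VA_antip (hX : ∀ x ∈ X, ∀ y ∈ X, cdist x y < 2 * π * k / (2 * k + 1))
    {i : ℕ} (hocc : Occ k X x0 i) : VA k X x0 (i + Hn k) ↔ ¬ VA k X x0 i := by
  constructor
  · intro hVH hV
    exact VA_far hX (by omega) (by omega) hV hVH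
  · intro hV
    rcases hocc with h | h
    · exact absurd h hV
    · exact h

lemma lam_flip (hX : ∀ x ∈ X, ∀ y ∈ X, cdist x y < 2 * π * k / (2 * k + 1)) (t : ℕ) :
    VA k X x0 (Wk k X x0 hx0 (t + t2v k X x0 hx0)) ↔ ¬ VA k X x0 (Wk k X x0 hx0 t) := by
  rw [Wk_add_t2 hx0]
  exact VA_antip hX (Wk_occ hx0 t)

lemma tau_per (hX : ∀ x ∈ X, ∀ y ∈ X, cdist x y < 2 * π * k / (2 * k + 1)) (t : ℕ) :
    tauP k X x0 hx0 (t + t2v k X x0 hx0) ↔ tauP k X x0 hx0 t := by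
  unfold tauP
  have h1 := lam_flip hx0 hX t
  have h2 := lam_flip hx0 hX (t + 1)
  have h3 : t + t2v k X x0 hx0 + 1 = (t + 1) + t2v k X x0 hx0 := by omega
  rw [h3, h2, h1]
  tauto

open scoped Classical in
lemma parity_walk (T : ℕ) :
    (VA k X x0 (Wk k X x0 hx0 T) ↔ VA k X x0 0) ↔
      Even (((Finset.range T).filter (tauP k X x0 hx0)).card) := by
  induction T with
  | zero =>
    simp [Wk_zero]
  | succ T ih =>
    rw [Finset.range_add_one, Finset.filter_insert]
    by_cases htau : tauP k X x0 hx0 T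
    · rw [if_pos htau, Finset.card_insert_of_notMem (by simp), Nat.even_add_one, ← ih]
      unfold tauP at htau
      tauto
    · rw [if_neg htau, ← ih]
      have heq : VA k X x0 (Wk k X x0 hx0 T) ↔ VA k X x0 (Wk k X x0 hx0 (T + 1)) :=
        not_not.mp htau
      tauto

open scoped Classical in
lemma TT_card_odd (hX : ∀ x ∈ X, ∀ y ∈ X, cdist x y < 2 * π * k / (2 * k + 1)) :
    Odd (((Finset.range (t2v k X x0 hx0)).filter (tauP k X x0 hx0)).card) := by
  rw [← Nat.not_even_iff_odd]
  intro heven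
  have := (parity_walk hx0 (t2v k X x0 hx0)).mpr heven
  rw [Wk_t2 hx0] at this
  have hVH : VA k X x0 (Hn k) := this.mpr (VA_zero hx0)
  exact VA_far hX (i := 0) (d := Hn k) (by omega) (by omega) (VA_zero hx0) (by simpa using hVH)

end Ctx5

def isA (X : Set ℝ) (x0 : ℝ) (p : ℝ) : Prop := ∃ x ∈ X, ∃ m : ℤ, p = x - x0 + 2 * π * m
def isB (X : Set ℝ) (x0 : ℝ) (p : ℝ) : Prop := ∃ x ∈ X, ∃ m : ℤ, p = x - x0 + π + 2 * π * m

section Ctx6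
variable {k : ℕ} {X : Set ℝ} {x0 : ℝ} (hx0 : x0 ∈ X)

lemma isA_add_pi {p : ℝ} (h : isA X x0 p) : isB X x0 (p + π) := by
  obtain ⟨x, hx, m, rfl⟩ := h
  exact ⟨x, hx, m, by ring⟩

lemma isB_add_pi {p : ℝ} (h : isB X x0 p) : isA X x0 (p + π) := by
  obtain ⟨x, hx, m, rfl⟩ := h
  exact ⟨x, hx, m + 1, by push_cast; ring⟩

lemma isA_add_two_pi {p : ℝ} (h : isA X x0 p) : isA X x0 (p + 2 * π) := by
  obtain ⟨x, hx, m, rfl⟩ := h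
  exact ⟨x, hx, m + 1, by push_cast; ring⟩

lemma ex_pos (t : ℕ) : ∃ p : ℝ,
    ((Wk k X x0 hx0 t : ℝ) * dlt k ≤ p ∧ p < (Wk k X x0 hx0 t : ℝ) * dlt k + dlt k) ∧
    ((VA k X x0 (Wk k X x0 hx0 t) → isA X x0 p) ∧
     (¬ VA k X x0 (Wk k X x0 hx0 t) → isB X x0 p)) := by
  set w := Wk k X x0 hx0 t with hw
  have hMd : (Mn k : ℝ) * dlt k = 2 * π := Mn_dlt k
  have hHd : (Hn k : ℝ) * dlt k = π := Hn_dlt k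
  have hd := dlt_pos k
  by_cases hVA : VA k X x0 w
  · obtain ⟨x, hx, hcell⟩ := hVA
    set q := w / Mn k with hq
    have hsplit : w = Mn k * q + w % Mn k := (Nat.div_add_mod w (Mn k)).symm
    have hsplit' : (w:ℝ) = (Mn k:ℝ) * (q:ℝ) + ((w % Mn k : ℕ):ℝ) := by exact_mod_cast hsplit
    have hb := cellOf_bounds k x0 x
    rw [hcell] at hb
    refine ⟨th x0 x + (q:ℝ) * (2 * π), ⟨?_, ?_⟩, fun _ => ⟨x, hx, ?_⟩, fun hn => absurd ?_ hn⟩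
    · have := hb.1
      nlinarith [hb.1]
    · nlinarith [hb.2]
    · obtain ⟨m, hm⟩ := th_rep x0 x
      exact ⟨m + q, by rw [hm]; push_cast; ring⟩
    · exact ⟨x, hx, hcell⟩
  · have hVB : VA k X x0 (w + Hn k) := by
      rcases Wk_occ hx0 t with h | h
      · exact absurd (by rwa [← hw] at h) hVA
      · rwa [← hw] at h
    obtain ⟨x, hx, hcell⟩ := hVB
    set q := (w + Hn k) / Mn k with hq
    have hsplit : w + Hn k = Mn k * q + (w + Hn k) % Mn k := (Nat.div_add_mod _ (Mn k)).symm
    have hsplit' : (w:ℝ) + (Hn k:ℝ) = (Mn k:ℝ) * (q:ℝ) + (((w + Hn k) % Mn k : ℕ):ℝ) := by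
      exact_mod_cast hsplit
    have hb := cellOf_bounds k x0 x
    rw [hcell] at hb
    refine ⟨th x0 x + (q:ℝ) * (2 * π) - π, ⟨?_, ?_⟩, fun hv => absurd hv hVA, fun _ => ⟨x, hx, ?_⟩⟩
    · nlinarith [hb.1]
    · nlinarith [hb.2]
    · obtain ⟨m, hm⟩ := th_rep x0 x
      exact ⟨m + q - 1, by rw [hm]; push_cast; ring⟩

end Ctx6

noncomputable def posA (k : ℕ) (X : Set ℝ) (x0 : ℝ) (hx0 : x0 ∈ X) (t : ℕ) : ℝ :=
  Classical.choose (ex_pos (k := k) (X := X) (x0 := x0) hx0 t)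

noncomputable def posQ (k : ℕ) (X : Set ℝ) (x0 : ℝ) (hx0 : x0 ∈ X) (t : ℕ) : ℝ :=
  if t < t2v k X x0 hx0 then posA k X x0 hx0 t
  else if t < 2 * t2v k X x0 hx0 then posA k X x0 hx0 (t - t2v k X x0 hx0) + π
  else posA k X x0 hx0 (t - 2 * t2v k X x0 hx0) + 2 * π

section Ctx7
variable {k : ℕ} {X : Set ℝ} {x0 : ℝ} (hx0 : x0 ∈ X)

lemma posA_spec (t : ℕ) :
    ((Wk k X x0 hx0 t : ℝ) * dlt k ≤ posA k X x0 hx0 t ∧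
      posA k X x0 hx0 t < (Wk k X x0 hx0 t : ℝ) * dlt k + dlt k) ∧
    ((VA k X x0 (Wk k X x0 hx0 t) → isA X x0 (posA k X x0 hx0 t)) ∧
     (¬ VA k X x0 (Wk k X x0 hx0 t) → isB X x0 (posA k X x0 hx0 t))) :=
  Classical.choose_spec (ex_pos (k := k) (X := X) (x0 := x0) hx0 t)

lemma posQ_bounds {t : ℕ} (ht : t ≤ 2 * t2v k X x0 hx0) :
    (Wk k X x0 hx0 t : ℝ) * dlt k ≤ posQ k X x0 hx0 t ∧
      posQ k X x0 hx0 t < (Wk k X x0 hx0 t : ℝ) * dlt k + dlt k := by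
  have hHd : (Hn k : ℝ) * dlt k = π := Hn_dlt k
  unfold posQ
  by_cases h1 : t < t2v k X x0 hx0
  · rw [if_pos h1]
    exact (posA_spec (k := k) hx0 t).1
  · rw [if_neg h1]
    by_cases h2 : t < 2 * t2v k X x0 hx0
    · rw [if_pos h2]
      have hWt : Wk k X x0 hx0 t = Wk k X x0 hx0 (t - t2v k X x0 hx0) + Hn k := by
        have := Wk_add_t2 (k := k) hx0 (t - t2v k X x0 hx0)
        rwa [show t - t2v k X x0 hx0 + t2v k X x0 hx0 = t by omega] at this
      have hb := (posA_spec (k := k) hx0 (t - t2v k X x0 hx0)).1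
      have hcast : (Wk k X x0 hx0 t : ℝ)
          = (Wk k X x0 hx0 (t - t2v k X x0 hx0) : ℝ) + (Hn k : ℝ) := by
        exact_mod_cast congrArg (fun n : ℕ => (n:ℝ)) hWt
      rw [hcast, add_mul, hHd]
      constructor <;> linarith [hb.1, hb.2]
    · rw [if_neg h2]
      have ht0 : t = 2 * t2v k X x0 hx0 := by omega
      have hWt : Wk k X x0 hx0 t = Hn k + Hn k := by
        rw [ht0, two_mul]
        rw [Wk_add_t2 hx0, Wk_t2 hx0]
      have hsub : t - 2 * t2v k X x0 hx0 = 0 := by omega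
      rw [hsub]
      have hb := (posA_spec (k := k) hx0 0).1
      rw [Wk_zero] at hb
      have hcast : (Wk k X x0 hx0 t : ℝ) = (Hn k : ℝ) + (Hn k : ℝ) := by
        exact_mod_cast congrArg (fun n : ℕ => (n:ℝ)) hWt
      rw [hcast]
      push_cast at hb
      constructor <;> nlinarith [hb.1, hb.2]

lemma posQ_type (hX : ∀ x ∈ X, ∀ y ∈ X, cdist x y < 2 * π * k / (2 * k + 1))
    {t : ℕ} (ht : t ≤ 2 * t2v k X x0 hx0) :
    (VA k X x0 (Wk k X x0 hx0 t) → isA X x0 (posQ k X x0 hx0 t)) ∧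
    (¬ VA k X x0 (Wk k X x0 hx0 t) → isB X x0 (posQ k X x0 hx0 t)) := by
  unfold posQ
  by_cases h1 : t < t2v k X x0 hx0
  · rw [if_pos h1]
    exact (posA_spec (k := k) hx0 t).2
  · rw [if_neg h1]
    by_cases h2 : t < 2 * t2v k X x0 hx0
    · rw [if_pos h2]
      have hts : t = (t - t2v k X x0 hx0) + t2v k X x0 hx0 := by omega
      have hflip : VA k X x0 (Wk k X x0 hx0 t) ↔
          ¬ VA k X x0 (Wk k X x0 hx0 (t - t2v k X x0 hx0)) := by
        conv_lhs => rw [hts]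
        exact lam_flip hx0 hX _
      constructor
      · intro hv
        have := ((posA_spec (k := k) hx0 (t - t2v k X x0 hx0)).2).2 (hflip.mp hv)
        exact isB_add_pi this
      · intro hv
        have hVA' : VA k X x0 (Wk k X x0 hx0 (t - t2v k X x0 hx0)) := by
          by_contra hcon
          exact hv (hflip.mpr hcon)
        have := ((posA_spec (k := k) hx0 (t - t2v k X x0 hx0)).2).1 hVA'
        exact isA_add_pi this
    · rw [if_neg h2]
      have ht0 : t = 2 * t2v k X x0 hx0 := by omega
      have hsub : t - 2 * t2v k X x0 hx0 = 0 := by omega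
      rw [hsub]
      have hWt : Wk k X x0 hx0 t = 0 + Mn k := by
        rw [ht0, two_mul, Wk_add_t2 hx0, Wk_t2 hx0, Mn_eq]
        ring
      have hVt : VA k X x0 (Wk k X x0 hx0 t) := by
        rw [hWt, VA_add_M]
        exact VA_zero hx0
      constructor
      · intro _
        have h00 : VA k X x0 (Wk k X x0 hx0 0) := by
          rw [Wk_zero hx0]
          exact VA_zero hx0
        have := ((posA_spec (k := k) hx0 0).2).1 h00
        exact isA_add_two_pi this
      · intro hv
        exact absurd hVt hv

lemma posQ_mono {t : ℕ} (ht : t < 2 * t2v k X x0 hx0) :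
    posQ k X x0 hx0 t < posQ k X x0 hx0 (t + 1) := by
  have hb1 := posQ_bounds hx0 (show t ≤ 2 * t2v k X x0 hx0 by omega)
  have hb2 := posQ_bounds hx0 (show t + 1 ≤ 2 * t2v k X x0 hx0 by omega)
  have hW : Wk k X x0 hx0 t + 1 ≤ Wk k X x0 hx0 (t + 1) := Wk_mono hx0 (Nat.lt_succ_self t)
  have hWc : (Wk k X x0 hx0 t : ℝ) + 1 ≤ (Wk k X x0 hx0 (t + 1) : ℝ) := by exact_mod_cast hW
  have hd := dlt_pos k
  nlinarith [hb1.2, hb2.1]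

lemma tau_gap (hX : ∀ x ∈ X, ∀ y ∈ X, cdist x y < 2 * π * k / (2 * k + 1))
    {t : ℕ} (ht : t < 2 * t2v k X x0 hx0) (htau : tauP k X x0 hx0 t) :
    2 * dlt k < posQ k X x0 hx0 (t + 1) - posQ k X x0 hx0 t := by
  have htyp1 := posQ_type hx0 hX (show t ≤ 2 * t2v k X x0 hx0 by omega)
  have htyp2 := posQ_type hx0 hX (show t + 1 ≤ 2 * t2v k X x0 hx0 by omega)
  have hmono := posQ_mono hx0 ht
  unfold tauP at htau
  have habs : 2 * dlt k < |posQ k X x0 hx0 t - posQ k X x0 hx0 (t + 1)| := by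
    by_cases hVA : VA k X x0 (Wk k X x0 hx0 t)
    · have hnVA : ¬ VA k X x0 (Wk k X x0 hx0 (t + 1)) := by tauto
      obtain ⟨x, hx, m, hp⟩ := htyp1.1 hVA
      obtain ⟨y, hy, m', hq⟩ := htyp2.2 hnVA
      have hkg := key_gap (x := x) (y := y) x0 m m'
      have hcd : cdist x y < π - 2 * dlt k := by
        have := hX x hx y hy
        rwa [bound_eq k] at this
      rw [← hp, ← hq] at hkg
      linarith
    · have hVA' : VA k X x0 (Wk k X x0 hx0 (t + 1)) := by tauto
      obtain ⟨y, hy, m', hq⟩ := htyp1.2 hVA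
      obtain ⟨x, hx, m, hp⟩ := htyp2.1 hVA'
      have hkg := key_gap (x := x) (y := y) x0 m m'
      have hcd : cdist x y < π - 2 * dlt k := by
        have := hX x hx y hy
        rwa [bound_eq k] at this
      rw [← hp, ← hq] at hkg
      rw [abs_sub_comm] at hkg
      linarith
  rw [abs_sub_comm, abs_of_pos (by linarith : (0:ℝ) < posQ k X x0 hx0 (t + 1) - posQ k X x0 hx0 t)]
    at habs
  exact habs

end Ctx7

open scoped Classical in
noncomputable def TTs (k : ℕ) (X : Set ℝ) (x0 : ℝ) (hx0 : x0 ∈ X) : Finset ℕ :=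
  (Finset.range (t2v k X x0 hx0)).filter (tauP k X x0 hx0)

section Ctx8
variable {k : ℕ} {X : Set ℝ} {x0 : ℝ} (hx0 : x0 ∈ X)
open scoped Classical

lemma TTfull_card (hX : ∀ x ∈ X, ∀ y ∈ X, cdist x y < 2 * π * k / (2 * k + 1)) :
    ((Finset.range (2 * t2v k X x0 hx0)).filter (tauP k X x0 hx0)).card
      = 2 * (TTs k X x0 hx0).card := by
  set T := t2v k X x0 hx0 with hT
  have hsplit : Finset.range (2 * T) = Finset.range T ∪ Finset.Ico T (2 * T) := by
    rw [Finset.range_eq_Ico, Finset.range_eq_Ico]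
    rw [Finset.Ico_union_Ico_eq_Ico (by omega) (by omega)]
  rw [hsplit, Finset.filter_union, Finset.card_union_of_disjoint]
  · have himg : ((Finset.range T).filter (tauP k X x0 hx0)).image (· + T)
        = (Finset.Ico T (2 * T)).filter (tauP k X x0 hx0) := by
      ext a
      simp only [Finset.mem_image, Finset.mem_filter, Finset.mem_range, Finset.mem_Ico]
      constructor
      · rintro ⟨b, ⟨hb1, hb2⟩, rfl⟩
        refine ⟨⟨by omega, by omega⟩, ?_⟩
        exact (tau_per hx0 hX b).mpr hb2
      · rintro ⟨⟨ha1, ha2⟩, ha3⟩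
        refine ⟨a - T, ⟨by omega, ?_⟩, by omega⟩
        have hsum : a - T + T = a := by omega
        refine (tau_per hx0 hX (a - T)).mp ?_
        show tauP k X x0 hx0 (a - T + t2v k X x0 hx0)
        rw [show a - T + t2v k X x0 hx0 = a from hsum]
        exact ha3
    have hcimg : ((Finset.range T).filter (tauP k X x0 hx0)).card
        = ((Finset.Ico T (2 * T)).filter (tauP k X x0 hx0)).card := by
      rw [← himg, Finset.card_image_of_injective _ (add_left_injective T)]
    unfold TTs
    rw [← hT, ← hcimg]
    ring
  · rw [Finset.range_eq_Ico]
    exact Finset.disjoint_filter_filter (Finset.Ico_disjoint_Ico_consecutive 0 T (2 * T))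

lemma TT_card_le (hX : ∀ x ∈ X, ∀ y ∈ X, cdist x y < 2 * π * k / (2 * k + 1)) :
    (TTs k X x0 hx0).card ≤ 2 * k - 1 := by
  have hodd : Odd (TTs k X x0 hx0).card := TT_card_odd hx0 hX
  set T := t2v k X x0 hx0 with hT
  set TTfull := (Finset.range (2 * T)).filter (tauP k X x0 hx0) with hTTfull
  have hcard : TTfull.card = 2 * (TTs k X x0 hx0).card := TTfull_card hx0 hX
  have hne : TTfull.Nonempty := by
    rw [← Finset.card_pos, hcard]
    obtain ⟨r, hr⟩ := hodd
    omega
  have hd := dlt_pos k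
  have h1 : ∑ t ∈ TTfull, (2 * dlt k) < ∑ t ∈ TTfull,
      (posQ k X x0 hx0 (t + 1) - posQ k X x0 hx0 t) := by
    apply Finset.sum_lt_sum_of_nonempty hne
    intro t htm
    rw [hTTfull, Finset.mem_filter, Finset.mem_range] at htm
    exact tau_gap hx0 hX htm.1 htm.2
  have h2 : ∑ t ∈ TTfull, (posQ k X x0 hx0 (t + 1) - posQ k X x0 hx0 t)
      ≤ ∑ t ∈ Finset.range (2 * T), (posQ k X x0 hx0 (t + 1) - posQ k X x0 hx0 t) := by
    apply Finset.sum_le_sum_of_subset_of_nonneg (Finset.filter_subset _ _)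
    intro t htm _
    rw [Finset.mem_range] at htm
    have := posQ_mono hx0 (show t < 2 * t2v k X x0 hx0 by omega)
    linarith
  have h3 : ∑ t ∈ Finset.range (2 * T), (posQ k X x0 hx0 (t + 1) - posQ k X x0 hx0 t)
      = posQ k X x0 hx0 (2 * T) - posQ k X x0 hx0 0 :=
    Finset.sum_range_sub (fun t => posQ k X x0 hx0 t) (2 * T)
  have ht2 := t2_pos (k := k) hx0
  have h4 : posQ k X x0 hx0 (2 * T) - posQ k X x0 hx0 0 = 2 * π := by
    unfold posQ
    rw [if_pos (by omega : (0:ℕ) < t2v k X x0 hx0)]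
    rw [if_neg (by omega : ¬ 2 * T < t2v k X x0 hx0),
        if_neg (by omega : ¬ 2 * T < 2 * t2v k X x0 hx0)]
    rw [show 2 * T - 2 * t2v k X x0 hx0 = 0 by omega]
    ring
  have h5 : ∑ t ∈ TTfull, (2 * dlt k) = (TTfull.card : ℝ) * (2 * dlt k) := by
    rw [Finset.sum_const, nsmul_eq_mul]
  have hMd : (Mn k : ℝ) * dlt k = 2 * π := Mn_dlt k
  have hfin : (TTfull.card : ℝ) * (2 * dlt k) < (Mn k : ℝ) * dlt k := by
    rw [hMd]
    calc (TTfull.card : ℝ) * (2 * dlt k) = ∑ t ∈ TTfull, (2 * dlt k) := h5.symm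
    _ < _ := h1
    _ ≤ _ := h2
    _ = posQ k X x0 hx0 (2 * T) - posQ k X x0 hx0 0 := h3
    _ = 2 * π := h4
  have hcards : (2 * (TTfull.card : ℝ)) * dlt k < (Mn k : ℝ) * dlt k := by
    calc (2 * (TTfull.card : ℝ)) * dlt k = (TTfull.card : ℝ) * (2 * dlt k) := by ring
    _ < (Mn k : ℝ) * dlt k := hfin
  have hnat : 2 * TTfull.card < Mn k := by
    have := lt_of_mul_lt_mul_right hcards hd.le
    exact_mod_cast this
  rw [hcard] at hnat
  unfold Mn at hnat
  obtain ⟨r, hr⟩ := hodd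
  omega

end Ctx8

noncomputable def cutv (k : ℕ) (X : Set ℝ) (x0 : ℝ) (hx0 : x0 ∈ X) (t : ℕ) : ℝ :=
  x0 + ((Wk k X x0 hx0 t : ℝ) + 1) * dlt k + dlt k / 2

section Ctx9
variable {k : ℕ} {X : Set ℝ} {x0 : ℝ} (hx0 : x0 ∈ X)
open scoped Classical

lemma tau_gapcell (hX : ∀ x ∈ X, ∀ y ∈ X, cdist x y < 2 * π * k / (2 * k + 1))
    {t : ℕ} (htau : tauP k X x0 hx0 t) : ¬ Occ k X x0 (Wk k X x0 hx0 t + 1) := by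
  intro hocc
  have hnx : Wk k X x0 hx0 (t + 1) = Wk k X x0 hx0 t + 1 := by
    rw [Wk_succ hx0]
    exact le_antisymm (nxt_le hx0 (Nat.lt_succ_self _) hocc) (nxt_gt (k := k) hx0 _)
  unfold tauP at htau
  rw [hnx] at htau
  by_cases hV : VA k X x0 (Wk k X x0 hx0 t)
  · have hnV : ¬ VA k X x0 (Wk k X x0 hx0 t + 1) := by tauto
    have hVB : VA k X x0 (Wk k X x0 hx0 t + 1 + Hn k) := by
      rcases hocc with h | h
      · exact absurd h hnV
      · exact h
    refine VA_far hX (i := Wk k X x0 hx0 t) (d := Hn k + 1) (by omega) (by omega) hV ?_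
    rw [show Wk k X x0 hx0 t + (Hn k + 1) = Wk k X x0 hx0 t + 1 + Hn k by omega]
    exact hVB
  · have hV1 : VA k X x0 (Wk k X x0 hx0 t + 1) := by tauto
    have hVB : VA k X x0 (Wk k X x0 hx0 t + Hn k) := by
      rcases Wk_occ hx0 t with h | h
      · exact absurd h hV
      · exact h
    have hH2 : 2 ≤ Hn k := by unfold Hn; omega
    refine VA_far hX (i := Wk k X x0 hx0 t + 1) (d := Hn k - 1) (by omega) (by omega) hV1 ?_
    rw [show Wk k X x0 hx0 t + 1 + (Hn k - 1) = Wk k X x0 hx0 t + Hn k by omega]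
    exact hVB

lemma mem_TTs {t : ℕ} (htT : t ∈ TTs k X x0 hx0) :
    t < t2v k X x0 hx0 ∧ tauP k X x0 hx0 t := by
  unfold TTs at htT
  rw [Finset.mem_filter, Finset.mem_range] at htT
  exact htT

lemma w_bound (hX : ∀ x ∈ X, ∀ y ∈ X, cdist x y < 2 * π * k / (2 * k + 1))
    {t : ℕ} (htT : t ∈ TTs k X x0 hx0) : Wk k X x0 hx0 t + 2 ≤ Hn k := by
  obtain ⟨htlt, htau⟩ := mem_TTs hx0 htT
  have h1 : Wk k X x0 hx0 t < Hn k := by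
    rw [← Wk_t2 (k := k) hx0]
    exact Wk_mono hx0 htlt
  have h2 : Wk k X x0 hx0 t ≠ Hn k - 1 := by
    intro heq
    apply tau_gapcell hx0 hX htau
    rw [heq, show Hn k - 1 + 1 = Hn k by unfold Hn; omega]
    simpa using Occ_mul_H hx0 1
  omega

lemma factor_dichotomy (hX : ∀ x ∈ X, ∀ y ∈ X, cdist x y < 2 * π * k / (2 * k + 1))
    {x : ℝ} (hx : x ∈ X) {t : ℕ} (htT : t ∈ TTs k X x0 hx0) :
    ((Wk k X x0 hx0 t + 2 ≤ cellOf k x0 x ∧ cellOf k x0 x ≤ Wk k X x0 hx0 t + Hn k) →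
        0 < Real.sin (x - cutv k X x0 hx0 t)) ∧
    (¬ (Wk k X x0 hx0 t + 2 ≤ cellOf k x0 x ∧ cellOf k x0 x ≤ Wk k X x0 hx0 t + Hn k) →
        Real.sin (x - cutv k X x0 hx0 t) < 0) := by
  obtain ⟨htlt, htau⟩ := mem_TTs hx0 htT
  have hwH : Wk k X x0 hx0 t + 2 ≤ Hn k := w_bound hx0 hX htT
  have hocc1 : ¬ Occ k X x0 (Wk k X x0 hx0 t + 1) := tau_gapcell hx0 hX htau
  set w := Wk k X x0 hx0 t with hwdef
  set a := cellOf k x0 x with hadef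
  have haM : a < Mn k := cellOf_lt k x0 x
  have hVAa : VA k X x0 a := ⟨x, hx, (Nat.mod_eq_of_lt haM).symm⟩
  have hOcca : Occ k X x0 a := Or.inl hVAa
  have hane1 : a ≠ w + 1 := by
    intro h
    rw [h] at hOcca
    exact hocc1 hOcca
  have hane2 : a ≠ w + 1 + Hn k := by
    intro h
    rw [h] at hOcca
    rw [Occ_add_H] at hOcca
    exact hocc1 hOcca
  have hsin : Real.sin (x - cutv k X x0 hx0 t)
      = Real.sin (th x0 x - (((w : ℝ) + 1) * dlt k + dlt k / 2)) := by
    have harg : x - cutv k X x0 hx0 t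
        = (th x0 x - (((w : ℝ) + 1) * dlt k + dlt k / 2)) + (⌊(x - x0) / (2*π)⌋ : ℤ) * (2*π) := by
      unfold cutv th
      push_cast
      ring
    rw [harg, Real.sin_add_int_mul_two_pi]
  have hb := cellOf_bounds k x0 x
  rw [← hadef] at hb
  have hd := dlt_pos k
  have hHd : (Hn k : ℝ) * dlt k = π := Hn_dlt k
  have hMd : (Mn k : ℝ) * dlt k = 2 * π := Mn_dlt k
  have htl := th_lt x0 x
  have htn := th_nonneg x0 x
  have hwHc : (w : ℝ) + 2 ≤ (Hn k : ℝ) := by exact_mod_cast hwH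
  constructor
  · rintro ⟨h1, h2⟩
    rw [hsin]
    apply Real.sin_pos_of_pos_of_lt_pi
    · have h1c : ((w : ℝ) + 2) ≤ (a : ℝ) := by exact_mod_cast h1
      have e1 : ((w : ℝ) + 2) * dlt k ≤ (a : ℝ) * dlt k :=
        mul_le_mul_of_nonneg_right h1c hd.le
      have e2 : ((w : ℝ) + 2) * dlt k = ((w : ℝ) + 1) * dlt k + dlt k := by ring
      linarith [hb.1]
    · have h2c : (a : ℝ) + 1 ≤ (w : ℝ) + (Hn k : ℝ) + 1 := by
        have : (a : ℝ) ≤ (w : ℝ) + (Hn k : ℝ) := by exact_mod_cast h2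
        linarith
      have e3 : ((a : ℝ) + 1) * dlt k ≤ ((w : ℝ) + (Hn k : ℝ) + 1) * dlt k :=
        mul_le_mul_of_nonneg_right h2c hd.le
      have e4 : ((w : ℝ) + (Hn k : ℝ) + 1) * dlt k
          = ((w : ℝ) + 1) * dlt k + (Hn k : ℝ) * dlt k := by ring
      rw [e4, hHd] at e3
      linarith [hb.2]
  · intro hout
    have hcases : a ≤ w ∨ w + Hn k + 2 ≤ a := by omega
    rw [hsin]
    have hu_pos : 0 < ((w : ℝ) + 1) * dlt k + dlt k / 2 := by positivity
    have hu_le : ((w : ℝ) + 1) * dlt k + dlt k / 2 < π := by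
      have e5 : ((w : ℝ) + 1) * dlt k ≤ ((Hn k : ℝ) - 1) * dlt k :=
        mul_le_mul_of_nonneg_right (by linarith) hd.le
      have e6 : ((Hn k : ℝ) - 1) * dlt k = (Hn k : ℝ) * dlt k - dlt k := by ring
      rw [e6, hHd] at e5
      linarith
    rcases hcases with hle | hge
    · apply Real.sin_neg_of_neg_of_neg_pi_lt
      · have hlec : (a : ℝ) + 1 ≤ (w : ℝ) + 1 := by
          have : (a : ℝ) ≤ (w : ℝ) := by exact_mod_cast hle
          linarith
        have e7 : ((a : ℝ) + 1) * dlt k ≤ ((w : ℝ) + 1) * dlt k :=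
          mul_le_mul_of_nonneg_right hlec hd.le
        linarith [hb.2]
      · linarith
    · rw [show th x0 x - (((w : ℝ) + 1) * dlt k + dlt k / 2)
          = (th x0 x - (((w : ℝ) + 1) * dlt k + dlt k / 2) - 2 * π) + 2 * π by ring,
        Real.sin_add_two_pi]
      apply Real.sin_neg_of_neg_of_neg_pi_lt
      · linarith
      · have hgec : (w : ℝ) + (Hn k : ℝ) + 2 ≤ (a : ℝ) := by exact_mod_cast hge
        have e8 : ((w : ℝ) + (Hn k : ℝ) + 2) * dlt k ≤ (a : ℝ) * dlt k :=
          mul_le_mul_of_nonneg_right hgec hd.le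
        have e9 : ((w : ℝ) + (Hn k : ℝ) + 2) * dlt k
            = ((w : ℝ) + 1) * dlt k + (Hn k : ℝ) * dlt k + dlt k := by ring
        rw [e9, hHd] at e8
        linarith [hb.1]

end Ctx9

open scoped Classical in
noncomputable def Fc (k : ℕ) (X : Set ℝ) (x0 : ℝ) (hx0 : x0 ∈ X) (a : ℕ) : ℕ :=
  ((TTs k X x0 hx0).filter (fun t =>
    ¬ (Wk k X x0 hx0 t + 2 ≤ a ∧ a ≤ Wk k X x0 hx0 t + Hn k))).card

section Ctx10
variable {k : ℕ} {X : Set ℝ} {x0 : ℝ} (hx0 : x0 ∈ X)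
open scoped Classical

lemma occ_between {s' j : ℕ} (h1 : Wk k X x0 hx0 s' ≤ j) (h2 : j < Wk k X x0 hx0 (s' + 1))
    (hocc : Occ k X x0 j) : j = Wk k X x0 hx0 s' := by
  rcases eq_or_lt_of_le h1 with heq | hlt
  · exact heq.symm
  · exfalso
    rw [Wk_succ hx0] at h2
    exact nxt_min hx0 hlt h2 hocc

lemma out_stable (hX : ∀ x ∈ X, ∀ y ∈ X, cdist x y < 2 * π * k / (2 * k + 1))
    {s' t : ℕ} (htT : t ∈ TTs k X x0 hx0) (hne1 : t ≠ s')
    (hne2 : t + t2v k X x0 hx0 ≠ s') :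
    (¬ (Wk k X x0 hx0 t + 2 ≤ Wk k X x0 hx0 s' ∧
        Wk k X x0 hx0 s' ≤ Wk k X x0 hx0 t + Hn k)) ↔
    (¬ (Wk k X x0 hx0 t + 2 ≤ Wk k X x0 hx0 (s' + 1) ∧
        Wk k X x0 hx0 (s' + 1) ≤ Wk k X x0 hx0 t + Hn k)) := by
  obtain ⟨htlt, htau⟩ := mem_TTs hx0 htT
  have hmono : Wk k X x0 hx0 s' < Wk k X x0 hx0 (s' + 1) := Wk_mono hx0 (Nat.lt_succ_self s')
  have c1 : Wk k X x0 hx0 t + 2 ≤ Wk k X x0 hx0 s' ↔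
      Wk k X x0 hx0 t + 2 ≤ Wk k X x0 hx0 (s' + 1) := by
    constructor
    · intro h; omega
    · intro h
      by_contra hcon
      push_neg at hcon
      rcases Nat.lt_or_ge (Wk k X x0 hx0 t) (Wk k X x0 hx0 s') with hB | hB
      · -- Wk t < Wk s' ≤ Wk t + 1, so Wk s' = Wk t + 1
        have heq : Wk k X x0 hx0 s' = Wk k X x0 hx0 t + 1 := by omega
        apply tau_gapcell hx0 hX htau
        rw [← heq]
        exact Wk_occ hx0 s'
      · -- Wk s' ≤ Wk t < Wk (s'+1)
        have heq : Wk k X x0 hx0 t = Wk k X x0 hx0 s' :=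
          occ_between hx0 hB (by omega) (Wk_occ hx0 t)
        exact hne1 ((Wk_mono (k := k) hx0).injective heq)
  have c2 : Wk k X x0 hx0 s' ≤ Wk k X x0 hx0 t + Hn k ↔
      Wk k X x0 hx0 (s' + 1) ≤ Wk k X x0 hx0 t + Hn k := by
    constructor
    · intro h
      by_contra hcon
      push_neg at hcon
      have heq : Wk k X x0 hx0 t + Hn k = Wk k X x0 hx0 s' :=
        occ_between hx0 h hcon (Occ_add_H.mpr (Wk_occ hx0 t))
      apply hne2
      apply (Wk_mono (k := k) hx0).injective
      rw [Wk_add_t2 hx0]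
      exact heq
    · intro h; omega
  rw [c1, c2]

lemma Fc_succ_parity (hX : ∀ x ∈ X, ∀ y ∈ X, cdist x y < 2 * π * k / (2 * k + 1))
    {s' : ℕ} (hs : s' < 2 * t2v k X x0 hx0) :
    (Even (Fc k X x0 hx0 (Wk k X x0 hx0 (s' + 1))) ↔
      (Even (Fc k X x0 hx0 (Wk k X x0 hx0 s')) ↔ ¬ tauP k X x0 hx0 s')) := by
  by_cases hτ : tauP k X x0 hx0 s'
  · by_cases hlt : s' < t2v k X x0 hx0
    · -- erase case
      have hmemTT : s' ∈ TTs k X x0 hx0 := by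
        unfold TTs
        rw [Finset.mem_filter, Finset.mem_range]
        exact ⟨hlt, hτ⟩
      have hA2 : Wk k X x0 hx0 s' + 2 ≤ Wk k X x0 hx0 (s' + 1) := by
        have h1 : Wk k X x0 hx0 s' < Wk k X x0 hx0 (s' + 1) := Wk_mono hx0 (Nat.lt_succ_self s')
        have h2 : Wk k X x0 hx0 (s' + 1) ≠ Wk k X x0 hx0 s' + 1 := by
          intro heq
          apply tau_gapcell hx0 hX hτ
          rw [← heq]
          exact Wk_occ hx0 (s' + 1)
        omega
      have hA3 : Wk k X x0 hx0 (s' + 1) ≤ Wk k X x0 hx0 s' + Hn k := by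
        rw [Wk_succ hx0]
        apply nxt_le hx0
        · have : 2 ≤ Hn k := by unfold Hn; omega
          omega
        · exact Occ_add_H.mpr (Wk_occ hx0 s')
      have hset : (TTs k X x0 hx0).filter (fun t =>
            ¬ (Wk k X x0 hx0 t + 2 ≤ Wk k X x0 hx0 (s' + 1) ∧
               Wk k X x0 hx0 (s' + 1) ≤ Wk k X x0 hx0 t + Hn k))
          = ((TTs k X x0 hx0).filter (fun t =>
            ¬ (Wk k X x0 hx0 t + 2 ≤ Wk k X x0 hx0 s' ∧
               Wk k X x0 hx0 s' ≤ Wk k X x0 hx0 t + Hn k))).erase s' := by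
        ext t
        simp only [Finset.mem_erase, Finset.mem_filter]
        constructor
        · rintro ⟨htT, hout⟩
          have hne1 : t ≠ s' := by
            intro heq
            subst heq
            exact hout ⟨hA2, hA3⟩
          have hne2 : t + t2v k X x0 hx0 ≠ s' := by
            have := (mem_TTs hx0 htT).1
            omega
          exact ⟨hne1, htT, (out_stable hx0 hX htT hne1 hne2).mpr hout⟩
        · rintro ⟨hne1, htT, hout⟩
          have hne2 : t + t2v k X x0 hx0 ≠ s' := by
            have := (mem_TTs hx0 htT).1
            omega
          exact ⟨htT, (out_stable hx0 hX htT hne1 hne2).mp hout⟩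
      have hmem' : s' ∈ (TTs k X x0 hx0).filter (fun t =>
            ¬ (Wk k X x0 hx0 t + 2 ≤ Wk k X x0 hx0 s' ∧
               Wk k X x0 hx0 s' ≤ Wk k X x0 hx0 t + Hn k)) := by
        rw [Finset.mem_filter]
        refine ⟨hmemTT, ?_⟩
        rintro ⟨hcon, -⟩
        omega
      unfold Fc
      rw [hset, Finset.card_erase_of_mem hmem']
      have hpos : 0 < ((TTs k X x0 hx0).filter (fun t =>
            ¬ (Wk k X x0 hx0 t + 2 ≤ Wk k X x0 hx0 s' ∧
               Wk k X x0 hx0 s' ≤ Wk k X x0 hx0 t + Hn k))).card :=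
        Finset.card_pos.mpr ⟨s', hmem'⟩
      rw [Nat.even_sub (by omega)]
      have hno1 : ¬ Even 1 := Nat.not_even_one
      tauto
    · -- insert case
      have ht0lt : s' - t2v k X x0 hx0 < t2v k X x0 hx0 := by omega
      have ht0 : (s' - t2v k X x0 hx0) + t2v k X x0 hx0 = s' := by omega
      have hτ0 : tauP k X x0 hx0 (s' - t2v k X x0 hx0) := by
        refine (tau_per hx0 hX _).mp ?_
        rwa [ht0]
      have hmem0 : (s' - t2v k X x0 hx0) ∈ TTs k X x0 hx0 := by
        unfold TTs
        rw [Finset.mem_filter, Finset.mem_range]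
        exact ⟨ht0lt, hτ0⟩
      have hWt0 : Wk k X x0 hx0 (s' - t2v k X x0 hx0) + Hn k = Wk k X x0 hx0 s' := by
        rw [← Wk_add_t2 hx0, ht0]
      have hH2 : 2 ≤ Hn k := by unfold Hn; omega
      have hmono : Wk k X x0 hx0 s' < Wk k X x0 hx0 (s' + 1) := Wk_mono hx0 (Nat.lt_succ_self s')
      have hset : (TTs k X x0 hx0).filter (fun t =>
            ¬ (Wk k X x0 hx0 t + 2 ≤ Wk k X x0 hx0 (s' + 1) ∧
               Wk k X x0 hx0 (s' + 1) ≤ Wk k X x0 hx0 t + Hn k))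
          = insert (s' - t2v k X x0 hx0) ((TTs k X x0 hx0).filter (fun t =>
            ¬ (Wk k X x0 hx0 t + 2 ≤ Wk k X x0 hx0 s' ∧
               Wk k X x0 hx0 s' ≤ Wk k X x0 hx0 t + Hn k))) := by
        ext t
        simp only [Finset.mem_insert, Finset.mem_filter]
        constructor
        · rintro ⟨htT, hout⟩
          by_cases heq : t = s' - t2v k X x0 hx0
          · exact Or.inl heq
          · refine Or.inr ⟨htT, ?_⟩
            have hne1 : t ≠ s' := by
              have := (mem_TTs hx0 htT).1
              omega
            have hne2 : t + t2v k X x0 hx0 ≠ s' := by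
              intro hcon
              exact heq (by omega)
            exact (out_stable hx0 hX htT hne1 hne2).mpr hout
        · rintro (heq | ⟨htT, hout⟩)
          · subst heq
            refine ⟨hmem0, ?_⟩
            rintro ⟨-, hcon⟩
            omega
          · have hne1 : t ≠ s' := by
              have := (mem_TTs hx0 htT).1
              omega
            have hne2 : t + t2v k X x0 hx0 ≠ s' := by
              intro hcon
              apply hout
              have hWt : Wk k X x0 hx0 t + Hn k = Wk k X x0 hx0 s' := by
                rw [← Wk_add_t2 hx0, hcon]
              omega
            exact ⟨htT, (out_stable hx0 hX htT hne1 hne2).mp hout⟩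
      have hnotmem : (s' - t2v k X x0 hx0) ∉ (TTs k X x0 hx0).filter (fun t =>
            ¬ (Wk k X x0 hx0 t + 2 ≤ Wk k X x0 hx0 s' ∧
               Wk k X x0 hx0 s' ≤ Wk k X x0 hx0 t + Hn k)) := by
        rw [Finset.mem_filter]
        rintro ⟨-, hout⟩
        exact hout ⟨by omega, by omega⟩
      unfold Fc
      rw [hset, Finset.card_insert_of_notMem hnotmem, Nat.even_add_one]
      simp only [hτ, not_true_eq_false]
      tauto
  · -- no transition : sets equal
    have hset : (TTs k X x0 hx0).filter (fun t =>
          ¬ (Wk k X x0 hx0 t + 2 ≤ Wk k X x0 hx0 (s' + 1) ∧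
             Wk k X x0 hx0 (s' + 1) ≤ Wk k X x0 hx0 t + Hn k))
        = (TTs k X x0 hx0).filter (fun t =>
          ¬ (Wk k X x0 hx0 t + 2 ≤ Wk k X x0 hx0 s' ∧
             Wk k X x0 hx0 s' ≤ Wk k X x0 hx0 t + Hn k)) := by
      apply Finset.filter_congr
      intro t htT
      have htau_t := (mem_TTs hx0 htT).2
      have hne1 : t ≠ s' := by
        intro heq
        exact hτ (heq ▸ htau_t)
      have hne2 : t + t2v k X x0 hx0 ≠ s' := by
        intro hcon
        apply hτ
        rw [← hcon]
        exact (tau_per hx0 hX t).mpr htau_t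
      exact (out_stable hx0 hX htT hne1 hne2).symm
    unfold Fc
    rw [hset]
    simp only [hτ, not_false_eq_true]
    tauto

lemma Fc_parity (hX : ∀ x ∈ X, ∀ y ∈ X, cdist x y < 2 * π * k / (2 * k + 1)) :
    ∀ s', s' ≤ 2 * t2v k X x0 hx0 →
      (Even (Fc k X x0 hx0 (Wk k X x0 hx0 s')) ↔ ¬ VA k X x0 (Wk k X x0 hx0 s')) := by
  intro s'
  induction s' with
  | zero =>
    intro _
    rw [Wk_zero hx0]
    have hFc0 : Fc k X x0 hx0 0 = (TTs k X x0 hx0).card := by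
      unfold Fc
      rw [Finset.filter_true_of_mem]
      intro t _
      rintro ⟨hcon, -⟩
      omega
    rw [hFc0]
    have hodd := TT_card_odd hx0 hX
    have hva := VA_zero (k := k) hx0
    constructor
    · intro he
      rw [← Nat.not_odd_iff_even] at he
      exact absurd hodd he
    · intro h
      exact absurd hva h
  | succ s' ih =>
    intro hle
    have ihs := ih (by omega)
    have hstep := Fc_succ_parity hx0 hX (show s' < 2 * t2v k X x0 hx0 by omega)
    unfold tauP at hstep
    by_cases hV : VA k X x0 (Wk k X x0 hx0 s') <;>
      by_cases hV' : VA k X x0 (Wk k X x0 hx0 (s' + 1)) <;>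
      tauto

end Ctx10

section Ctx11
variable {k : ℕ} {X : Set ℝ} {x0 : ℝ} (hx0 : x0 ∈ X)
open scoped Classical

lemma Fc_odd_at (hX : ∀ x ∈ X, ∀ y ∈ X, cdist x y < 2 * π * k / (2 * k + 1))
    {x : ℝ} (hx : x ∈ X) : ¬ Even (Fc k X x0 hx0 (cellOf k x0 x)) := by
  set a := cellOf k x0 x with ha
  have haM : a < Mn k := cellOf_lt k x0 x
  have hVAa : VA k X x0 a := ⟨x, hx, (Nat.mod_eq_of_lt haM).symm⟩
  obtain ⟨sx, hsx⟩ := Wk_cover hx0 (Or.inl hVAa)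
  have hW2 : Wk k X x0 hx0 (2 * t2v k X x0 hx0) = Mn k := by
    rw [show 2 * t2v k X x0 hx0 = t2v k X x0 hx0 + t2v k X x0 hx0 by ring,
        Wk_add_t2 hx0, Wk_t2 hx0, Mn_eq]
    ring
  have hsxle : sx ≤ 2 * t2v k X x0 hx0 := by
    have hlt : Wk k X x0 hx0 sx < Wk k X x0 hx0 (2 * t2v k X x0 hx0) := by
      rw [hW2, hsx]
      exact haM
    exact le_of_lt ((Wk_mono (k := k) hx0).lt_iff_lt.mp hlt)
  have hpar := Fc_parity hx0 hX sx hsxle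
  rw [hsx] at hpar
  intro he
  exact (hpar.mp he) hVAa

lemma prod_neg (hX : ∀ x ∈ X, ∀ y ∈ X, cdist x y < 2 * π * k / (2 * k + 1))
    {x : ℝ} (hx : x ∈ X) :
    (∏ t ∈ TTs k X x0 hx0, Real.sin (x - cutv k X x0 hx0 t)) < 0 := by
  set a := cellOf k x0 x with ha
  rw [← Finset.prod_filter_mul_prod_filter_not (TTs k X x0 hx0)
      (fun t => Wk k X x0 hx0 t + 2 ≤ a ∧ a ≤ Wk k X x0 hx0 t + Hn k)]
  have hp1 : 0 < ∏ t ∈ (TTs k X x0 hx0).filter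
      (fun t => Wk k X x0 hx0 t + 2 ≤ a ∧ a ≤ Wk k X x0 hx0 t + Hn k),
      Real.sin (x - cutv k X x0 hx0 t) := by
    apply Finset.prod_pos
    intro t htm
    rw [Finset.mem_filter] at htm
    exact (factor_dichotomy hx0 hX hx htm.1).1 htm.2
  have hneg : ∀ t ∈ (TTs k X x0 hx0).filter
      (fun t => ¬ (Wk k X x0 hx0 t + 2 ≤ a ∧ a ≤ Wk k X x0 hx0 t + Hn k)),
      Real.sin (x - cutv k X x0 hx0 t) < 0 := by
    intro t htm
    rw [Finset.mem_filter] at htm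
    exact (factor_dichotomy hx0 hX hx htm.1).2 htm.2
  have hcard : ((TTs k X x0 hx0).filter
      (fun t => ¬ (Wk k X x0 hx0 t + 2 ≤ a ∧ a ≤ Wk k X x0 hx0 t + Hn k))).card
      = Fc k X x0 hx0 a := by
    unfold Fc
    congr 1
  have hodd : Odd ((TTs k X x0 hx0).filter
      (fun t => ¬ (Wk k X x0 hx0 t + 2 ≤ a ∧ a ≤ Wk k X x0 hx0 t + Hn k))).card := by
    rw [hcard, ← Nat.not_even_iff_odd]
    exact Fc_odd_at hx0 hX hx
  have hp2 : ∏ t ∈ (TTs k X x0 hx0).filter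
      (fun t => ¬ (Wk k X x0 hx0 t + 2 ≤ a ∧ a ≤ Wk k X x0 hx0 t + Hn k)),
      Real.sin (x - cutv k X x0 hx0 t) < 0 := by
    set N := (TTs k X x0 hx0).filter
      (fun t => ¬ (Wk k X x0 hx0 t + 2 ≤ a ∧ a ≤ Wk k X x0 hx0 t + Hn k)) with hN
    have hstep : ∏ t ∈ N, Real.sin (x - cutv k X x0 hx0 t)
        = (∏ _t ∈ N, (-1 : ℝ)) * ∏ t ∈ N, (- Real.sin (x - cutv k X x0 hx0 t)) := by
      rw [← Finset.prod_mul_distrib]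
      apply Finset.prod_congr rfl
      intro t _
      ring
    rw [hstep, Finset.prod_const]
    have hpos : 0 < ∏ t ∈ N, (- Real.sin (x - cutv k X x0 hx0 t)) := by
      apply Finset.prod_pos
      intro t htm
      have := hneg t htm
      linarith
    rw [Odd.neg_one_pow hodd]
    nlinarith
  exact mul_neg_of_pos_of_neg hp1 hp2

end Ctx11


end RPP

theorem raked_poly_positive (k : ℕ) (X : Set ℝ)
    (hX : ∀ x ∈ X, ∀ y ∈ X, cdist x y < 2 * Real.pi * k / (2 * k + 1)) :
    ∃ a b : Fin k → ℝ, ∀ x ∈ X,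
      0 < ∑ j : Fin k, (a j * Real.cos ((2 * (j : ℕ) + 1) * x) +
                        b j * Real.sin ((2 * (j : ℕ) + 1) * x)) := by
  classical
  rcases Set.eq_empty_or_nonempty X with hXe | ⟨x0, hx0⟩
  · refine ⟨0, 0, fun x hx => ?_⟩
    rw [hXe] at hx
    exact absurd hx (Set.notMem_empty x)
  · rcases Nat.eq_zero_or_pos k with hk0 | hkpos
    · exfalso
      have hbad := hX x0 hx0 x0 hx0
      have h0 : (0:ℝ) ≤ cdist x0 x0 := norm_nonneg _
      rw [hk0] at hbad
      norm_num at hbad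
      linarith
    · obtain ⟨r, hr⟩ := RPP.TT_card_odd hx0 hX
      have hr2 : (RPP.TTs k X x0 hx0).card = 2 * r + 1 := hr
      have hle := RPP.TT_card_le hx0 hX
      have hrk : r + 1 ≤ k := by omega
      have hRaked : RPP.Raked k
          (fun xx => -(∏ t ∈ RPP.TTs k X x0 hx0,
            Real.sin (xx - RPP.cutv k X x0 hx0 t))) :=
        RPP.R_neg (RPP.R_mono hrk
          (RPP.R_prod r (RPP.TTs k X x0 hx0) (RPP.cutv k X x0 hx0) hr2))
      obtain ⟨a, b, hab⟩ := hRaked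
      refine ⟨a, b, fun x hx => ?_⟩
      rw [← hab x]
      have := RPP.prod_neg hx0 hX hx
      show (0:ℝ) < -(∏ t ∈ RPP.TTs k X x0 hx0, Real.sin (x - RPP.cutv k X x0 hx0 t))
      linarith
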